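/- arXiv:1711.05589 — 2 statements merged into one kernel-verified Lean document; each statement's English description precedes it below -/
import Mathlib

section
/- Let J = [p,q] be a compact interval, f an orientation-preserving homeomorphism of J, and N ∈ ℕ. If f^N is λ-expansive on J for some λ > 0, then f is ((λ+1)^{1/N} − 1)-expansive on J. -/
/-- The distance from the pair `{y, g y}` to the boundary of `[p,q]`. -/
noncomputable def bdryDist (p q : ℝ) (g : ℝ → ℝ) (y : ℝ) : ℝ :=
  min (min (y - p) (q - y)) (min (g y - p) (q - g y))

/-- Let `f` be an orientation-preserving homeomorphism of `J = [p,q]`.  If `f^N` is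
`λ`-expansive on `J`, i.e. `sup_{y∈J} |f^N(y)−y| / d({y, f^N(y)}, ∂J) ≥ λ`,
then `f` is `((λ+1)^{1/N} − 1)`-expansive on `J`. -/
theorem expansive_of_iterate_expansive (p q : ℝ) (hpq : p < q) (f : ℝ → ℝ)
    (hbij : Set.BijOn f (Set.Icc p q) (Set.Icc p q))
    (hcont : ContinuousOn f (Set.Icc p q))
    (hmono : StrictMonoOn f (Set.Icc p q))
    (N : ℕ) (hN : 0 < N) (lam : ℝ) (hlam : 0 < lam)
    (hexp : ∃ y ∈ Set.Icc p q, lam ≤ |f^[N] y - y| / bdryDist p q (f^[N]) y) :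
    ∃ y ∈ Set.Icc p q,
      (lam + 1) ^ (1 / (N : ℝ)) - 1 ≤ |f y - y| / bdryDist p q f y := by
  classical
  have hpI : p ∈ Set.Icc p q := ⟨le_refl p, le_of_lt hpq⟩
  have hqI : q ∈ Set.Icc p q := ⟨le_of_lt hpq, le_refl q⟩
  -- endpoints are fixed
  have hfp : f p = p := by
    have h1 : p ≤ f p := (hbij.mapsTo hpI).1
    obtain ⟨x, hx, hfx⟩ := hbij.surjOn hpI
    have h2 : f p ≤ f x := hmono.monotoneOn hpI hx hx.1
    rw [hfx] at h2
    linarith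
  have hfq : f q = q := by
    have h1 : f q ≤ q := (hbij.mapsTo hqI).2
    obtain ⟨x, hx, hfx⟩ := hbij.surjOn hqI
    have h2 : f x ≤ f q := hmono.monotoneOn hx hqI hx.2
    rw [hfx] at h2
    linarith
  -- interior maps into interior
  have hIoo : ∀ x ∈ Set.Ioo p q, f x ∈ Set.Ioo p q := by
    intro x hx
    constructor
    · rw [← hfp]; exact hmono hpI (Set.Ioo_subset_Icc_self hx) hx.1
    · rw [← hfq]; exact hmono (Set.Ioo_subset_Icc_self hx) hqI hx.2
  obtain ⟨y, hy, hley⟩ := hexp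
  -- y is in the interior
  have hyI : y ∈ Set.Ioo p q := by
    by_contra hcon
    have hfix : f^[N] y = y := by
      rcases hy.1.eq_or_lt with h | h
      · rw [← h]; exact Function.iterate_fixed hfp N
      rcases hy.2.eq_or_lt with h2 | h2
      · rw [h2]; exact Function.iterate_fixed hfq N
      · exact absurd ⟨h, h2⟩ hcon
    rw [hfix] at hley
    simp at hley
    linarith
  have hykI : ∀ k, f^[k] y ∈ Set.Ioo p q := by
    intro k
    induction k with
    | zero => simpa using hyI
    | succ n ih => rw [Function.iterate_succ_apply']; exact hIoo _ ih
  have hD : 0 < bdryDist p q (f^[N]) y := by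
    have h1 := hyI
    have h2 := hykI N
    unfold bdryDist
    exact lt_min (lt_min (by linarith [h1.1]) (by linarith [h1.2]))
      (lt_min (by linarith [h2.1]) (by linarith [h2.2]))
  have hnum : lam * bdryDist p q (f^[N]) y ≤ |f^[N] y - y| := (le_div_iff₀ hD).mp hley
  have hN0 : (N : ℝ) ≠ 0 := Nat.cast_ne_zero.mpr hN.ne'
  set mu := (lam + 1) ^ (1 / (N : ℝ)) - 1 with hmu_def
  have hmu_pos : 0 < mu := by
    have h1 : 1 < (lam + 1) ^ (1 / (N : ℝ)) :=
      (Real.one_lt_rpow_iff_of_pos (by linarith)).mpr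
        (Or.inl ⟨by linarith, one_div_pos.mpr (Nat.cast_pos.mpr hN)⟩)
    rw [hmu_def]; linarith
  have hpow : (1 + mu) ^ N = lam + 1 := by
    have h1 : (1 : ℝ) + mu = (lam + 1) ^ (1 / (N : ℝ)) := by rw [hmu_def]; ring
    rw [h1, ← Real.rpow_natCast ((lam + 1) ^ (1 / (N : ℝ))) N,
      ← Real.rpow_mul (by linarith : (0:ℝ) ≤ lam + 1), one_div_mul_cancel hN0,
      Real.rpow_one]
  have h1mu : (0:ℝ) < 1 + mu := by linarith
  by_contra hcon
  push_neg at hcon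
  -- component bounds for bdryDist
  have hb1 : ∀ z, bdryDist p q f z ≤ z - p := fun z => by
    unfold bdryDist; exact le_trans (min_le_left _ _) (min_le_left _ _)
  have hb2 : ∀ z, bdryDist p q f z ≤ q - z := fun z => by
    unfold bdryDist; exact le_trans (min_le_left _ _) (min_le_right _ _)
  have hb3 : ∀ z, bdryDist p q f z ≤ f z - p := fun z => by
    unfold bdryDist; exact le_trans (min_le_right _ _) (min_le_left _ _)
  have hb4 : ∀ z, bdryDist p q f z ≤ q - f z := fun z => by
    unfold bdryDist; exact le_trans (min_le_right _ _) (min_le_right _ _)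
  have hstep : ∀ z ∈ Set.Ioo p q, |f z - z| < mu * bdryDist p q f z := by
    intro z hz
    have hfz := hIoo z hz
    have hbd : 0 < bdryDist p q f z := by
      unfold bdryDist
      exact lt_min (lt_min (by linarith [hz.1]) (by linarith [hz.2]))
        (lt_min (by linarith [hfz.1]) (by linarith [hfz.2]))
    exact (div_lt_iff₀ hbd).mp (hcon z (Set.Ioo_subset_Icc_self hz))
  have key1 : ∀ z ∈ Set.Ioo p q, f z - z < mu * (z - p) := by
    intro z hz
    calc f z - z ≤ |f z - z| := le_abs_self _
      _ < mu * bdryDist p q f z := hstep z hz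
      _ ≤ mu * (z - p) := mul_le_mul_of_nonneg_left (hb1 z) hmu_pos.le
  have key2 : ∀ z ∈ Set.Ioo p q, f z - z < mu * (q - f z) := by
    intro z hz
    calc f z - z ≤ |f z - z| := le_abs_self _
      _ < mu * bdryDist p q f z := hstep z hz
      _ ≤ mu * (q - f z) := mul_le_mul_of_nonneg_left (hb4 z) hmu_pos.le
  have key3 : ∀ z ∈ Set.Ioo p q, z - f z < mu * (f z - p) := by
    intro z hz
    calc z - f z ≤ |f z - z| := by rw [abs_sub_comm]; exact le_abs_self _
      _ < mu * bdryDist p q f z := hstep z hz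
      _ ≤ mu * (f z - p) := mul_le_mul_of_nonneg_left (hb3 z) hmu_pos.le
  have key4 : ∀ z ∈ Set.Ioo p q, z - f z < mu * (q - z) := by
    intro z hz
    calc z - f z ≤ |f z - z| := by rw [abs_sub_comm]; exact le_abs_self _
      _ < mu * bdryDist p q f z := hstep z hz
      _ ≤ mu * (q - z) := mul_le_mul_of_nonneg_left (hb2 z) hmu_pos.le
  obtain ⟨M, rfl⟩ : ∃ M, N = M + 1 := ⟨N - 1, (Nat.succ_pred_eq_of_pos hN).symm⟩
  rcases lt_trichotomy y (f y) with hlt | heq | hgt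
  · -- increasing orbit
    have horb : ∀ k, f^[k] y < f^[k + 1] y := by
      intro k
      induction k with
      | zero => simpa using hlt
      | succ n ih =>
        have h := hmono (Set.Ioo_subset_Icc_self (hykI n))
          (Set.Ioo_subset_Icc_self (hykI (n + 1))) ih
        rwa [← Function.iterate_succ_apply' f n, ← Function.iterate_succ_apply' f (n + 1)] at h
    have hyle : ∀ k, y ≤ f^[k] y := by
      intro k
      induction k with
      | zero => simp
      | succ n ih => exact ih.trans (horb n).le
    have hA : ∀ k, f^[k] y - p ≤ (1 + mu) ^ k * (y - p) := by
      intro k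
      induction k with
      | zero => simp
      | succ n ih =>
        have h1 := key1 _ (hykI n)
        have h2 : (1 + mu) * (f^[n] y - p) ≤ (1 + mu) * ((1 + mu) ^ n * (y - p)) :=
          mul_le_mul_of_nonneg_left ih h1mu.le
        have h3 : (1 + mu) * ((1 + mu) ^ n * (y - p)) = (1 + mu) ^ (n + 1) * (y - p) := by ring
        rw [Function.iterate_succ_apply' f n]
        linarith
    have hB : ∀ k, q - y ≤ (1 + mu) ^ k * (q - f^[k] y) := by
      intro k
      induction k with
      | zero => simp
      | succ n ih =>
        have h1 := key2 _ (hykI n)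
        have hpn : (0:ℝ) < (1 + mu) ^ n := pow_pos h1mu n
        have h2 : q - f^[n] y ≤ (1 + mu) * (q - f (f^[n] y)) := by linarith
        have h3 : (1 + mu) ^ n * (q - f^[n] y) ≤ (1 + mu) ^ n * ((1 + mu) * (q - f (f^[n] y))) :=
          mul_le_mul_of_nonneg_left h2 hpn.le
        have h4 : (1 + mu) ^ n * ((1 + mu) * (q - f (f^[n] y))) =
            (1 + mu) ^ (n + 1) * (q - f (f^[n] y)) := by ring
        rw [Function.iterate_succ_apply' f n]
        linarith
    -- strict final bounds
    have hA' : f^[M + 1] y - p < (lam + 1) * (y - p) := by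
      have h1 := key1 _ (hykI M)
      have h2 : (1 + mu) * (f^[M] y - p) ≤ (1 + mu) * ((1 + mu) ^ M * (y - p)) :=
        mul_le_mul_of_nonneg_left (hA M) h1mu.le
      have h3 : (1 + mu) * ((1 + mu) ^ M * (y - p)) = (1 + mu) ^ (M + 1) * (y - p) := by ring
      rw [Function.iterate_succ_apply' f M, ← hpow]
      linarith
    have hB' : q - y < (lam + 1) * (q - f^[M + 1] y) := by
      have h1 := key2 _ (hykI M)
      have hpn : (0:ℝ) < (1 + mu) ^ M := pow_pos h1mu M
      have h2 : q - f^[M] y < (1 + mu) * (q - f (f^[M] y)) := by linarith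
      have h3 : (1 + mu) ^ M * (q - f^[M] y) < (1 + mu) ^ M * ((1 + mu) * (q - f (f^[M] y))) :=
        mul_lt_mul_of_pos_left h2 hpn
      have h4 : (1 + mu) ^ M * ((1 + mu) * (q - f (f^[M] y))) =
          (1 + mu) ^ (M + 1) * (q - f (f^[M] y)) := by ring
      rw [Function.iterate_succ_apply' f M, ← hpow]
      linarith [hB M]
    have hyA : y ≤ f^[M + 1] y := hyle (M + 1)
    have habs : |f^[M + 1] y - y| = f^[M + 1] y - y := abs_of_nonneg (by linarith)
    rw [habs] at hnum
    -- D ≥ min (y - p) (q - A)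
    have hAI := hykI (M + 1)
    have hDge : min (y - p) (q - f^[M + 1] y) ≤ bdryDist p q (f^[M + 1]) y := by
      unfold bdryDist
      refine le_min (le_min (min_le_left _ _) ?_) (le_min ?_ (min_le_right _ _))
      · exact (min_le_right _ _).trans (by linarith)
      · exact (min_le_left _ _).trans (by linarith)
    have hmulD : lam * min (y - p) (q - f^[M + 1] y) ≤ lam * bdryDist p q (f^[M + 1]) y :=
      mul_le_mul_of_nonneg_left hDge hlam.le
    rcases le_total (y - p) (q - f^[M + 1] y) with h | h
    · rw [min_eq_left h] at hmulD
      nlinarith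
    · rw [min_eq_right h] at hmulD
      nlinarith
  · -- fixed point
    have hfix : f^[M + 1] y = y := Function.iterate_fixed heq.symm (M + 1)
    rw [hfix, sub_self, abs_zero] at hnum
    nlinarith [hD, hlam]
  · -- decreasing orbit
    have horb : ∀ k, f^[k + 1] y < f^[k] y := by
      intro k
      induction k with
      | zero => simpa using hgt
      | succ n ih =>
        have h := hmono (Set.Ioo_subset_Icc_self (hykI (n + 1)))
          (Set.Ioo_subset_Icc_self (hykI n)) ih
        rwa [← Function.iterate_succ_apply' f n, ← Function.iterate_succ_apply' f (n + 1)] at h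
    have hyle : ∀ k, f^[k] y ≤ y := by
      intro k
      induction k with
      | zero => simp
      | succ n ih => exact (horb n).le.trans ih
    have hA : ∀ k, y - p ≤ (1 + mu) ^ k * (f^[k] y - p) := by
      intro k
      induction k with
      | zero => simp
      | succ n ih =>
        have h1 := key3 _ (hykI n)
        have hpn : (0:ℝ) < (1 + mu) ^ n := pow_pos h1mu n
        have h2 : f^[n] y - p ≤ (1 + mu) * (f (f^[n] y) - p) := by linarith
        have h3 : (1 + mu) ^ n * (f^[n] y - p) ≤ (1 + mu) ^ n * ((1 + mu) * (f (f^[n] y) - p)) :=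
          mul_le_mul_of_nonneg_left h2 hpn.le
        have h4 : (1 + mu) ^ n * ((1 + mu) * (f (f^[n] y) - p)) =
            (1 + mu) ^ (n + 1) * (f (f^[n] y) - p) := by ring
        rw [Function.iterate_succ_apply' f n]
        linarith
    have hB : ∀ k, q - f^[k] y ≤ (1 + mu) ^ k * (q - y) := by
      intro k
      induction k with
      | zero => simp
      | succ n ih =>
        have h1 := key4 _ (hykI n)
        have h2 : (1 + mu) * (q - f^[n] y) ≤ (1 + mu) * ((1 + mu) ^ n * (q - y)) :=
          mul_le_mul_of_nonneg_left ih h1mu.le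
        have h3 : (1 + mu) * ((1 + mu) ^ n * (q - y)) = (1 + mu) ^ (n + 1) * (q - y) := by ring
        rw [Function.iterate_succ_apply' f n]
        linarith
    have hA' : y - p < (lam + 1) * (f^[M + 1] y - p) := by
      have h1 := key3 _ (hykI M)
      have hpn : (0:ℝ) < (1 + mu) ^ M := pow_pos h1mu M
      have h2 : f^[M] y - p < (1 + mu) * (f (f^[M] y) - p) := by linarith
      have h3 : (1 + mu) ^ M * (f^[M] y - p) < (1 + mu) ^ M * ((1 + mu) * (f (f^[M] y) - p)) :=
        mul_lt_mul_of_pos_left h2 hpn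
      have h4 : (1 + mu) ^ M * ((1 + mu) * (f (f^[M] y) - p)) =
          (1 + mu) ^ (M + 1) * (f (f^[M] y) - p) := by ring
      rw [Function.iterate_succ_apply' f M, ← hpow]
      linarith [hA M]
    have hB' : q - f^[M + 1] y < (lam + 1) * (q - y) := by
      have h1 := key4 _ (hykI M)
      have h2 : (1 + mu) * (q - f^[M] y) ≤ (1 + mu) * ((1 + mu) ^ M * (q - y)) :=
        mul_le_mul_of_nonneg_left (hB M) h1mu.le
      have h3 : (1 + mu) * ((1 + mu) ^ M * (q - y)) = (1 + mu) ^ (M + 1) * (q - y) := by ring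
      rw [Function.iterate_succ_apply' f M, ← hpow]
      linarith
    have hyA : f^[M + 1] y ≤ y := hyle (M + 1)
    have habs : |f^[M + 1] y - y| = y - f^[M + 1] y := by
      rw [abs_sub_comm]; exact abs_of_nonneg (by linarith)
    rw [habs] at hnum
    have hAI := hykI (M + 1)
    have hDge : min (f^[M + 1] y - p) (q - y) ≤ bdryDist p q (f^[M + 1]) y := by
      unfold bdryDist
      refine le_min (le_min ?_ (min_le_right _ _)) (le_min (min_le_left _ _) ?_)
      · exact (min_le_left _ _).trans (by linarith)
      · exact (min_le_right _ _).trans (by linarith)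
    have hmulD : lam * min (f^[M + 1] y - p) (q - y) ≤ lam * bdryDist p q (f^[M + 1]) y :=
      mul_le_mul_of_nonneg_left hDge hlam.le
    rcases le_total (f^[M + 1] y - p) (q - y) with h | h
    · rw [min_eq_left h] at hmulD
      nlinarith
    · rw [min_eq_right h] at hmulD
      nlinarith
end

section
/- Suppose ρ : BS(1,m) = ⟨x, y | x y x⁻¹ = y^m⟩ → Homeo₊(I) is a homomorphism for an integer m > 1. If ρ(y) ≠ 1, then ρ is injective. -/
/-- The single defining relator `x y x⁻¹ (y^m)⁻¹` of the Baumslag–Solitar group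
`BS(1,m) = ⟨x, y | x y x⁻¹ = y^m⟩`, with `x = of 0` and `y = of 1`. -/
def bsRels (m : ℕ) : Set (FreeGroup (Fin 2)) :=
  {FreeGroup.of 0 * FreeGroup.of 1 * (FreeGroup.of 0)⁻¹ * (FreeGroup.of 1 ^ m)⁻¹}

/-- The Baumslag–Solitar group `BS(1,m)`. -/
def BS (m : ℕ) := PresentedGroup (bsRels m)

noncomputable instance (m : ℕ) : Group (BS m) := by unfold BS; infer_instance

section aux
variable {G : Type*} [Group G]

/-- conjugation of a power. -/
lemma conj_zpow_rel {x y : G} {m : ℕ} (h : x * y * x⁻¹ = y ^ m) (p : ℤ) :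
    x * y ^ p * x⁻¹ = y ^ (p * m) := by
  rw [← conj_zpow, h, ← zpow_natCast y m, ← zpow_mul, mul_comm]

/-- shifting a power of `y` down `k` levels. -/
lemma shift_rel {x y : G} {m : ℕ} (h : x * y * x⁻¹ = y ^ m) (p : ℤ) (k : ℕ) :
    y ^ p = x ^ (-(k : ℤ)) * y ^ (p * m ^ k) * x ^ (k : ℤ) := by
  induction k generalizing p with
  | zero => simp
  | succ k ih =>
    have h2 : y ^ (p * m ^ k) = x⁻¹ * y ^ (p * m ^ k * m) * x := by
      rw [← conj_zpow_rel h (p * m ^ k)]; group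
    rw [ih p, h2]
    have e1 : p * m ^ k * m = p * m ^ (k + 1) := by ring
    rw [e1]
    group

end aux

section bsgroup
variable {m : ℕ}

private noncomputable def XX (m : ℕ) : BS m := PresentedGroup.of 0
private noncomputable def YY (m : ℕ) : BS m := PresentedGroup.of 1

lemma bs_relation (m : ℕ) : XX m * YY m * (XX m)⁻¹ = YY m ^ m := by
  have h1 : (FreeGroup.of 0 * FreeGroup.of 1 * (FreeGroup.of 0)⁻¹ *
      (FreeGroup.of 1 ^ m)⁻¹ : FreeGroup (Fin 2)) ∈ Subgroup.normalClosure (bsRels m) :=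
    Subgroup.subset_normalClosure (by simp [bsRels])
  have h2 : (QuotientGroup.mk (FreeGroup.of 0 * FreeGroup.of 1 * (FreeGroup.of 0)⁻¹ *
      (FreeGroup.of 1 ^ m)⁻¹) : BS m) = 1 :=
    (QuotientGroup.eq_one_iff _).mpr h1
  have h3 : XX m * YY m * (XX m)⁻¹ * (YY m ^ m)⁻¹ = 1 := by
    refine Eq.trans ?_ h2
    rfl
  rw [← mul_inv_eq_one]
  exact h3

/-- normal form : every element of BS m is `x^(-j) y^p x^j x^q`. -/
lemma bs_nf (g : BS m) :
    ∃ j p q : ℤ, g = XX m ^ (-j) * YY m ^ p * XX m ^ j * XX m ^ q := by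
  set x := XX m
  set y := YY m
  have hrel : x * y * x⁻¹ = y ^ m := bs_relation m
  -- lifting lemma
  have lift : ∀ (j : ℤ) (p : ℤ) (k : ℕ),
      x ^ (-j) * y ^ p * x ^ j = x ^ (-(j + k)) * y ^ (p * m ^ k) * x ^ (j + k) := by
    intro j p k
    rw [shift_rel hrel p k]
    rw [show (-(j + (k:ℤ))) = -j + -(k:ℤ) by ring, zpow_add, zpow_add]
    group
  -- common-level multiplication
  have mulc : ∀ (j p j' p' : ℤ), ∃ J P : ℤ,
      (x ^ (-j) * y ^ p * x ^ j) * (x ^ (-j') * y ^ p' * x ^ j') =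
      x ^ (-J) * y ^ P * x ^ J := by
    intro j p j' p'
    refine ⟨max j j', p * m ^ (max j j' - j).toNat + p' * m ^ (max j j' - j').toNat, ?_⟩
    have hj : j + ((max j j' - j).toNat : ℤ) = max j j' := by
      rw [Int.toNat_of_nonneg (by omega)]; ring
    have hj' : j' + ((max j j' - j').toNat : ℤ) = max j j' := by
      rw [Int.toNat_of_nonneg (by omega)]; ring
    rw [lift j p (max j j' - j).toNat, lift j' p' (max j j' - j').toNat, hj, hj']
    rw [zpow_add y]
    group
  -- main induction over the presented group
  induction g using QuotientGroup.induction_on with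
  | H w =>
  induction w using FreeGroup.induction_on with
  | C1 => exact ⟨0, 0, 0, by simp; rfl⟩
  | of i =>
    fin_cases i
    · exact ⟨0, 0, 1, by simp [x, XX, PresentedGroup.of]; rfl⟩
    · exact ⟨0, 1, 0, by simp [y, YY, PresentedGroup.of]; rfl⟩
  | inv_of i _ =>
    fin_cases i
    · refine ⟨0, 0, -1, ?_⟩
      show (x : BS m)⁻¹ = _
      simp
    · refine ⟨0, -1, 0, ?_⟩
      show (y : BS m)⁻¹ = _
      simp
  | mul w w' ih ih' =>
    obtain ⟨j, p, q, hw⟩ := ih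
    obtain ⟨j', p', q', hw'⟩ := ih'
    rw [QuotientGroup.mk_mul, hw, hw']
    show ∃ J P Q : ℤ, (x ^ (-j) * y ^ p * x ^ j * x ^ q : BS m) * (x ^ (-j') * y ^ p' * x ^ j' * x ^ q') =
      x ^ (-J) * y ^ P * x ^ J * x ^ Q
    -- conjugate the middle block
    have key : x ^ q * (x ^ (-j') * y ^ p' * x ^ j') * x ^ (-q) =
        x ^ (-(j' - q)) * y ^ p' * x ^ (j' - q) := by
      rw [show (-(j' - q)) = q + -j' by ring, show j' - q = j' + -q by ring,
        zpow_add, zpow_add, zpow_neg]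
      group
    obtain ⟨J, P, hJP⟩ := mulc j p (j' - q) p'
    refine ⟨J, P, q + q', ?_⟩
    rw [← hJP, ← key]
    rw [zpow_add x q q']
    group

end bsgroup

/-- a monotone permutation of ℝ of finite (nonzero) order is the identity. -/
lemma mono_perm_torsion (e : Equiv.Perm ℝ) (he : Monotone ⇑e) {n : ℕ} (hn : n ≠ 0)
    (h : e ^ n = 1) : e = 1 := by
  by_contra hne
  obtain ⟨t, ht⟩ : ∃ t, e t ≠ t := by
    by_contra h'
    push_neg at h'
    exact hne (Equiv.ext h')
  have pow_apply : ∀ k : ℕ, (e ^ (k + 1)) t = e ((e ^ k) t) := by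
    intro k
    rw [pow_succ']
    rfl
  rcases lt_or_gt_of_ne ht with hlt | hgt
  · have key : ∀ k : ℕ, (e ^ (k + 1)) t ≤ e t := by
      intro k
      induction k with
      | zero => simp [pow_apply 0]
      | succ k ih =>
        rw [pow_apply (k + 1)]
        exact he (le_of_lt (lt_of_le_of_lt ih hlt))
    obtain ⟨k, hk⟩ : ∃ k, n = k + 1 := ⟨n - 1, by omega⟩
    have := key k
    rw [← hk, h] at this
    simp at this
    exact absurd (lt_of_le_of_lt this hlt) (lt_irrefl t)
  · have key : ∀ k : ℕ, e t ≤ (e ^ (k + 1)) t := by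
      intro k
      induction k with
      | zero => simp [pow_apply 0]
      | succ k ih =>
        rw [pow_apply (k + 1)]
        exact he (le_of_lt (lt_of_lt_of_le hgt ih))
    obtain ⟨k, hk⟩ : ∃ k, n = k + 1 := ⟨n - 1, by omega⟩
    have := key k
    rw [← hk, h] at this
    simp at this
    exact absurd (lt_of_lt_of_le hgt this) (lt_irrefl t)

lemma mono_perm_torsion_z (e : Equiv.Perm ℝ) (he : Monotone ⇑e) {n : ℤ} (hn : n ≠ 0)
    (h : e ^ n = 1) : e = 1 := by
  have h2 : e ^ (n.natAbs) = 1 := by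
    rcases Int.natAbs_eq n with h' | h'
    · rw [← zpow_natCast, ← h', h]
    · rw [← zpow_natCast, ← neg_neg (n.natAbs : ℤ), ← h', zpow_neg, h, inv_one]
  exact mono_perm_torsion e he (by omega) h2

/-- If `ρ : BS(1,m) → Homeo₊(I)` is a homomorphism into the group of
orientation-preserving homeomorphisms of a compact interval `I = [a,b]`
(realized as homeomorphisms of `ℝ` fixing the complement of `I`) with
`ρ(y) ≠ 1`, then `ρ` is injective. -/
theorem bs_faithful (m : ℕ) (hm : 1 < m) (a b : ℝ)
    (ρ : BS m →* Equiv.Perm ℝ)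
    (hmono : ∀ g : BS m, Monotone ⇑(ρ g))
    (hcont : ∀ g : BS m, Continuous ⇑(ρ g))
    (hsupp : ∀ (g : BS m) (x : ℝ), x ∉ Set.Icc a b → ρ g x = x)
    (hy : ρ (PresentedGroup.of (1 : Fin 2)) ≠ 1) :
    Function.Injective ⇑ρ := by
  rw [injective_iff_map_eq_one]
  intro g hg
  obtain ⟨j, p, q, rfl⟩ := bs_nf g
  set f := ρ (XX m) with hf
  set h := ρ (YY m) with hh
  have hyh : h ≠ 1 := hy
  have hrel : f * h * f⁻¹ = h ^ m := by
    rw [hf, hh, ← map_inv, ← map_mul, ← map_mul, ← map_pow, bs_relation]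
  have hg' : f ^ (-j) * h ^ p * f ^ j * f ^ q = 1 := by
    rw [hf, hh, ← map_zpow, ← map_zpow, ← map_zpow, ← map_zpow, ← map_mul, ← map_mul,
      ← map_mul]
    exact hg
  have e0 : f ^ (-j) * h ^ p * f ^ j = f ^ (-q) := by
    calc f ^ (-j) * h ^ p * f ^ j
        = (f ^ (-j) * h ^ p * f ^ j * f ^ q) * f ^ (-q) := by group
      _ = 1 * f ^ (-q) := by rw [hg']
      _ = f ^ (-q) := one_mul _
  have hp : h ^ p = f ^ (-q) := by
    calc h ^ p = f ^ j * (f ^ (-j) * h ^ p * f ^ j) * f ^ (-j) := by group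
      _ = f ^ j * f ^ (-q) * f ^ (-j) := by rw [e0]
      _ = f ^ (-q) := by group
  have hconj : f * h ^ p * f⁻¹ = h ^ (p * m) := conj_zpow_rel hrel p
  have hfix : f * h ^ p * f⁻¹ = h ^ p := by
    rw [hp]; group
  have hpm : h ^ (p * m - p) = 1 := by
    rw [zpow_sub, ← hconj, hfix, hp, mul_inv_cancel]
  have hp0 : p = 0 := by
    by_contra hp0
    exact hyh (mono_perm_torsion_z h (hmono _) (n := p * m - p)
      (by
        have : (m : ℤ) ≥ 2 := by exact_mod_cast hm
        rcases lt_or_gt_of_ne hp0 with h' | h' <;> nlinarith) hpm)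
  have hq0 : q = 0 := by
    by_contra hq0
    have hfq : f ^ (-q) = 1 := by rw [← hp, hp0, zpow_zero]
    have hf1 : f = 1 := mono_perm_torsion_z f (hmono _) (n := -q) (by omega) hfq
    have hhm : h = h ^ m := by
      have := hrel
      rw [hf1] at this
      simpa using this
    have hcanc : h ^ (m - 1) * h = 1 * h := by
      rw [← pow_succ, one_mul, show m - 1 + 1 = m by omega]
      exact hhm.symm
    exact hyh (mono_perm_torsion h (hmono _) (n := m - 1) (by omega)
      (mul_right_cancel hcanc))
  rw [hp0, hq0]
  simp
end
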